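/- Let ψ : ℝ → ℝ, and let z ∈ ℂ with z not a nonpositive real number (so that the principal argument arg is differentiable at z). Suppose ψ has derivative ψ'(arg z) at arg z. Define f : ℂ → ℂ by f(w) = |w|·exp(i·ψ(arg w)) for w ≠ 0 (and f(0) = 0). Then f is real-differentiable at z, and its Wirtinger derivatives at z satisfy ∂̄f(z)·(1 + ψ'(arg z))·conj(z) = ∂f(z)·(1 − ψ'(arg z))·z; in particular, where ∂f(z) ≠ 0 and ψ'(arg z) ≠ −1, the Beltrami derivative is μ(z) = ∂̄f(z)/∂f(z) = ((1 − ψ'(arg z))/(1 + ψ'(arg z)))·(z/conj(z)). -/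

import Mathlib

/-!
Near `z`, `f = exp ∘ mapIm ψ ∘ log` with `mapIm ψ (x + iy) = x + iψ(y)`. The differential of
`mapIm ψ` is `h ↦ Re h + iψ' Im h = ((1 + ψ') h + (1 - ψ') h̄) / 2`, so by the chain rule
`D h = e^c ((1 + ψ') h / z + (1 - ψ') h̄ / z̄) / 2` with `c = mapIm ψ (log z)`. Hence
`∂f = e^c (1 + ψ') / (2z)` and `∂̄f = e^c (1 - ψ') / (2z̄)`, and both claims are algebra.
-/

open ComplexConjugate

namespace Complex

/-- Every `ℝ`-linear map `ℂ → ℂ` is `h ↦ a h + b h̄`, with Wirtinger derivatives `a` and `b`. -/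
noncomputable def wirtingerCLM (a b : ℂ) : ℂ →L[ℝ] ℂ :=
  a • (1 : ℂ →L[ℝ] ℂ) + b • (conjCLE : ℂ →L[ℝ] ℂ)

@[simp]
lemma wirtingerCLM_apply (a b h : ℂ) : wirtingerCLM a b h = a * h + b * conj h := rfl

lemma wirtingerCLM_holomorphic (a b : ℂ) :
    (wirtingerCLM a b 1 - I * wirtingerCLM a b I) / 2 = a := by
  simp only [wirtingerCLM_apply, map_one, conj_I]
  linear_combination (-a / 2 + b / 2) * I_sq

lemma wirtingerCLM_antiholomorphic (a b : ℂ) :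
    (wirtingerCLM a b 1 + I * wirtingerCLM a b I) / 2 = b := by
  simp only [wirtingerCLM_apply, map_one, conj_I]
  linear_combination (a / 2 - b / 2) * I_sq

def mapIm (ψ : ℝ → ℝ) (v : ℂ) : ℂ := ⟨v.re, ψ v.im⟩

lemma mapIm_eq (ψ : ℝ → ℝ) : mapIm ψ = fun v => (v.re : ℂ) + (ψ v.im : ℂ) * I := by
  funext v; apply Complex.ext <;> simp [mapIm]

lemma exp_mapIm_log (ψ : ℝ → ℝ) {w : ℂ} (hw : w ≠ 0) :
    exp (mapIm ψ (log w)) = ‖w‖ * exp (I * ψ (arg w)) := by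
  rw [mapIm_eq, exp_add, log_re, log_im, ← ofReal_exp, Real.exp_log (norm_pos_iff.mpr hw),
    mul_comm I]

lemma hasFDerivAt_mapIm {ψ : ℝ → ℝ} {ψ' : ℝ} {v : ℂ} (hψ : HasDerivAt ψ ψ' v.im) :
    HasFDerivAt (mapIm ψ) (wirtingerCLM ((1 + ψ') / 2) ((1 - ψ') / 2)) v := by
  have hre : HasFDerivAt (fun v : ℂ => (v.re : ℂ)) (ofRealCLM.comp reCLM) v :=
    (ofRealCLM.comp reCLM).hasFDerivAt
  have him : HasFDerivAt (fun v : ℂ => (ψ v.im : ℂ)) (ofRealCLM.comp (ψ' • imCLM)) v :=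
    ofRealCLM.hasFDerivAt.comp v (hψ.comp_hasFDerivAt v imCLM.hasFDerivAt)
  rw [mapIm_eq]
  refine (hre.add (him.mul_const I)).congr_fderiv ?_
  ext h
  simp only [ContinuousLinearMap.comp_smulₛₗ, Real.ringHom_apply, add_apply,
    ContinuousLinearMap.comp_apply, reCLM_apply, ofRealCLM_apply, smul_apply,
    imCLM_apply, real_smul, smul_eq_mul, wirtingerCLM_apply]
  rw [re_eq_add_conj, im_eq_sub_conj]
  field_simp
  ring

lemma hasFDerivAt_exp_mapIm_log {ψ : ℝ → ℝ} {ψ' : ℝ} {z : ℂ} (hz : z ∈ slitPlane)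
    (hψ : HasDerivAt ψ ψ' (arg z)) :
    HasFDerivAt (fun w => exp (mapIm ψ (log w)))
      (wirtingerCLM (exp (mapIm ψ (log z)) * (1 + ψ') / (2 * z))
        (exp (mapIm ψ (log z)) * (1 - ψ') / (2 * conj z))) z := by
  have hlog : HasFDerivAt log (((1 : ℂ →L[ℂ] ℂ).smulRight z⁻¹).restrictScalars ℝ) z :=
    (hasDerivAt_log hz).hasFDerivAt.restrictScalars ℝ
  have hmapIm := hasFDerivAt_mapIm (ψ := ψ) (v := log z) (by rwa [log_im])
  have hexp := (hasDerivAt_exp (mapIm ψ (log z))).hasFDerivAt.restrictScalars ℝ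
  refine (hexp.comp z (hmapIm.comp z hlog)).congr_fderiv ?_
  ext h
  simp only [ContinuousLinearMap.comp_apply, ContinuousLinearMap.coe_restrictScalars',
    ContinuousLinearMap.smulRight_apply, one_apply_eq_self, smul_eq_mul, wirtingerCLM_apply,
    map_mul, map_inv₀, ContinuousLinearMap.toSpanSingleton_apply]
  ring

end Complex

open Complex Topology

theorem stmt_18_general (ψ : ℝ → ℝ) (ψ' : ℝ) (z : ℂ) (hz : z ∈ Complex.slitPlane)
    (hψ : HasDerivAt ψ ψ' (Complex.arg z))
    (f : ℂ → ℂ)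
    (hf : ∀ w : ℂ, w ≠ 0 →
      f w = (‖w‖ : ℂ) * Complex.exp (Complex.I * (ψ (Complex.arg w) : ℂ))) :
    ∃ D : ℂ →L[ℝ] ℂ, HasFDerivAt f D z ∧
      ((D 1 + Complex.I * D Complex.I) / 2) * ((1 + ψ' : ℝ) : ℂ) * (starRingEnd ℂ) z =
        ((D 1 - Complex.I * D Complex.I) / 2) * ((1 - ψ' : ℝ) : ℂ) * z ∧
      ((D 1 - Complex.I * D Complex.I) / 2 ≠ 0 → ψ' ≠ -1 →
        ((D 1 + Complex.I * D Complex.I) / 2) / ((D 1 - Complex.I * D Complex.I) / 2) =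
          (((1 - ψ') / (1 + ψ') : ℝ) : ℂ) * (z / (starRingEnd ℂ) z)) := by
  have hf_eq : f =ᶠ[𝓝 z] fun w => exp (mapIm ψ (log w)) := by
    filter_upwards [isOpen_slitPlane.mem_nhds hz] with w hw
    rw [hf w (slitPlane_ne_zero hw), exp_mapIm_log ψ (slitPlane_ne_zero hw)]
  have hz0 : z ≠ 0 := slitPlane_ne_zero hz
  have hconj_z : conj z ≠ 0 := (map_ne_zero _).mpr hz0
  refine ⟨_, (hasFDerivAt_exp_mapIm_log hz hψ).congr_of_eventuallyEq hf_eq, ?_, fun _ hψ' => ?_⟩ <;>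
    rw [wirtingerCLM_holomorphic, wirtingerCLM_antiholomorphic]
  · push_cast
    field_simp
  · have h1ψ : (1 + ψ' : ℂ) ≠ 0 := by exact_mod_cast fun h => hψ' (by linarith)
    push_cast
    field_simp

/-- Sectorial quasiconformal mapping. Let `ψ : ℝ → ℝ` have derivative `ψ'`
at `arg z`, where `z` lies in the slit plane (not a nonpositive real), and let
`f w = |w| * exp (i ψ(arg w))` for `w ≠ 0`, `f 0 = 0`. Then `f` is real-differentiable
at `z` with some ℝ-linear Fréchet derivative `D`, and the Wirtinger derivatives
`∂f = (D 1 - i D i)/2`, `∂̄f = (D 1 + i D i)/2` satisfy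
`∂̄f * (1 + ψ') * conj z = ∂f * (1 - ψ') * z`; in particular, if `∂f ≠ 0` and
`ψ' ≠ -1`, then `∂̄f/∂f = ((1 - ψ')/(1 + ψ')) * (z / conj z)`. -/
theorem stmt_18 (ψ : ℝ → ℝ) (ψ' : ℝ) (z : ℂ) (hz : z ∈ Complex.slitPlane)
    (hψ : HasDerivAt ψ ψ' (Complex.arg z))
    (f : ℂ → ℂ)
    (hf : ∀ w : ℂ, w ≠ 0 →
      f w = (‖w‖ : ℂ) * Complex.exp (Complex.I * (ψ (Complex.arg w) : ℂ)))
    (hf0 : f 0 = 0) :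
    ∃ D : ℂ →L[ℝ] ℂ, HasFDerivAt f D z ∧
      ((D 1 + Complex.I * D Complex.I) / 2) * ((1 + ψ' : ℝ) : ℂ) * (starRingEnd ℂ) z =
        ((D 1 - Complex.I * D Complex.I) / 2) * ((1 - ψ' : ℝ) : ℂ) * z ∧
      ((D 1 - Complex.I * D Complex.I) / 2 ≠ 0 → ψ' ≠ -1 →
        ((D 1 + Complex.I * D Complex.I) / 2) / ((D 1 - Complex.I * D Complex.I) / 2) =
          (((1 - ψ') / (1 + ψ') : ℝ) : ℂ) * (z / (starRingEnd ℂ) z)) :=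
  stmt_18_general ψ ψ' z hz hψ f hf
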